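/- arXiv:1410.4526 — 5 statements merged into one kernel-verified Lean document; each statement's English description precedes it below -/
import Mathlib

section
/- Let U ⊆ ℝ² be open, x : U → ℝ³ a smooth immersion with smooth unit normal n. Then the Weingarten equation holds: for every b ∈ {1,2} and every point of U, ∂_b n = Σ_a (g⁻¹K)^a_b ∂_a x. -/
open Matrix
open scoped BigOperators

/-- Partial derivative of a map in the `a`-th coordinate direction of `ℝ²`. -/
noncomputable def pd {E : Type*} [NormedAddCommGroup E] [NormedSpace ℝ E]
    (a : Fin 2) (f : (Fin 2 → ℝ) → E) (p : Fin 2 → ℝ) : E :=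
  fderiv ℝ f p (Pi.single a 1)

/- component differentiability -/
lemma diff_comp {u : (Fin 2 → ℝ) → (Fin 3 → ℝ)} {p : Fin 2 → ℝ}
    (hu : DifferentiableAt ℝ u p) (i : Fin 3) :
    DifferentiableAt ℝ (fun q => u q i) p :=
  ((ContinuousLinearMap.proj (R := ℝ) (φ := fun _ : Fin 3 => ℝ) i).differentiableAt).comp p hu

lemma pd_proj {u : (Fin 2 → ℝ) → (Fin 3 → ℝ)} {p : Fin 2 → ℝ}
    (hu : DifferentiableAt ℝ u p) (b : Fin 2) (i : Fin 3) :
    pd b (fun q => u q i) p = pd b u p i := by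
  have h : HasFDerivAt (fun q => u q i)
      ((ContinuousLinearMap.proj (R := ℝ) (φ := fun _ : Fin 3 => ℝ) i).comp (fderiv ℝ u p)) p :=
    (ContinuousLinearMap.proj (R := ℝ) (φ := fun _ : Fin 3 => ℝ) i).hasFDerivAt.comp p
      hu.hasFDerivAt
  simp [pd, h.fderiv]

/-- product rule for the dot product -/
lemma pd_dot {u v : (Fin 2 → ℝ) → (Fin 3 → ℝ)} {p : Fin 2 → ℝ}
    (hu : DifferentiableAt ℝ u p) (hv : DifferentiableAt ℝ v p) (b : Fin 2) :
    pd b (fun q => ∑ i, u q i * v q i) p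
      = ∑ i, (pd b u p i * v p i + u p i * pd b v p i) := by
  have hdiff : ∀ i ∈ (Finset.univ : Finset (Fin 3)),
      DifferentiableAt ℝ (fun q => u q i * v q i) p :=
    fun i _ => (diff_comp hu i).mul (diff_comp hv i)
  unfold pd
  rw [fderiv_fun_sum hdiff]
  rw [ContinuousLinearMap.sum_apply]
  refine Finset.sum_congr rfl fun i _ => ?_
  rw [fderiv_fun_mul (diff_comp hu i) (diff_comp hv i)]
  have h1 := pd_proj hu b i
  have h2 := pd_proj hv b i
  simp only [pd] at h1 h2
  simp [h1, h2, mul_comm]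
  ring

/-- **Weingarten equation**: `∂_b n = Σ_a (g⁻¹K)^a_b ∂_a x`. -/
theorem weingarten (U : Set (Fin 2 → ℝ)) (hU : IsOpen U)
    (x n : (Fin 2 → ℝ) → (Fin 3 → ℝ))
    (hx : ContDiffOn ℝ (⊤ : ℕ∞) x U) (hn : ContDiffOn ℝ (⊤ : ℕ∞) n U)
    (himm : ∀ p ∈ U, LinearIndependent ℝ (fun a : Fin 2 => pd a x p))
    (hunit : ∀ p ∈ U, ∑ i, n p i * n p i = 1)
    (horth : ∀ p ∈ U, ∀ a : Fin 2, ∑ i, n p i * pd a x p i = 0)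
    (g : (Fin 2 → ℝ) → Matrix (Fin 2) (Fin 2) ℝ)
    (hg : ∀ p a b, g p a b = ∑ i, pd a x p i * pd b x p i)
    (K : (Fin 2 → ℝ) → Matrix (Fin 2) (Fin 2) ℝ)
    (hK : ∀ p a b, K p a b = ∑ i, pd a n p i * pd b x p i) :
    ∀ b : Fin 2, ∀ p ∈ U,
      pd b n p = ∑ a, ((g p)⁻¹ * K p) a b • pd a x p := by
  intro b p hp
  have hpn : U ∈ nhds p := hU.mem_nhds hp
  have hxat : ContDiffAt ℝ (⊤ : ℕ∞) x p := hx.contDiffAt hpn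
  have hnd : DifferentiableAt ℝ n p := (hn.contDiffAt hpn).differentiableAt (by simp)
  -- the tangent vector fields
  set X : Fin 2 → (Fin 2 → ℝ) → (Fin 3 → ℝ) :=
    fun c q => fderiv ℝ x q (Pi.single c 1) with hXdef
  have hXpd : ∀ c q, X c q = pd c x q := fun _ _ => rfl
  have hfd1 : ContDiffOn ℝ 1 (fderiv ℝ x) U := hx.fderiv_of_isOpen hU (WithTop.coe_le_coe.mpr le_top)
  have hXd : ∀ c, DifferentiableAt ℝ (X c) p := by
    intro c
    exact (((hfd1.clm_apply contDiffOn_const).contDiffAt hpn).differentiableAt one_ne_zero)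
  have hd2 : DifferentiableAt ℝ (fderiv ℝ x) p :=
    (hfd1.contDiffAt hpn).differentiableAt one_ne_zero
  have hpdX : ∀ b c : Fin 2, pd b (X c) p
      = fderiv ℝ (fderiv ℝ x) p (Pi.single b 1) (Pi.single c 1) := by
    intro b c
    have h := fderiv_clm_apply (𝕜 := ℝ) hd2
      (differentiableAt_const (Pi.single (M := fun _ : Fin 2 => ℝ) c 1))
    simp only [pd, hXdef, h]
    simp
  have hsymm : IsSymmSndFDerivAt ℝ x p := hxat.isSymmSndFDerivAt (by rw [minSmoothness_of_isRCLikeNormedField]; exact WithTop.coe_le_coe.mpr le_top)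
  have hXsymm : ∀ b c : Fin 2, pd b (X c) p = pd c (X b) p := by
    intro b c; rw [hpdX, hpdX]; exact hsymm _ _
  -- (A)  n · ∂_b n = 0
  have hA : ∑ i, n p i * pd b n p i = 0 := by
    have hconst : (fun q => ∑ i, n q i * n q i) =ᶠ[nhds p] fun _ => 1 :=
      Filter.eventuallyEq_of_mem hpn fun q hq => hunit q hq
    have h0 : pd b (fun q => ∑ i, n q i * n q i) p = 0 := by
      unfold pd
      rw [hconst.fderiv_eq]
      simp
    have h1 := pd_dot hnd hnd b
    rw [h0] at h1
    have h2 : ∑ i, (pd b n p i * n p i + n p i * pd b n p i)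
        = 2 * ∑ i, n p i * pd b n p i := by
      rw [Finset.mul_sum]
      refine Finset.sum_congr rfl fun i _ => by ring
    rw [h2] at h1
    linarith
  -- (B)  K p b c = - n · ∂_b X_c, hence K symmetric at p
  have hKform : ∀ b c : Fin 2, K p b c = - ∑ i, n p i * pd b (X c) p i := by
    intro b c
    have hzero : (fun q => ∑ i, n q i * X c q i) =ᶠ[nhds p] fun _ => 0 :=
      Filter.eventuallyEq_of_mem hpn fun q hq => horth q hq c
    have h0 : pd b (fun q => ∑ i, n q i * X c q i) p = 0 := by
      unfold pd
      rw [hzero.fderiv_eq]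
      simp
    have h1 := pd_dot hnd (hXd c) b
    rw [h0] at h1
    rw [Finset.sum_add_distrib] at h1
    have h2 : ∑ i, pd b n p i * X c p i = K p b c := (hK p b c).symm
    linarith [h1, h2]
  have hKsymm : ∀ b c : Fin 2, K p b c = K p c b := by
    intro b c
    rw [hKform b c, hKform c b]
    congr 1
    exact Finset.sum_congr rfl fun i _ => by rw [hXsymm b c]
  -- invertibility of g p
  have hkey : ∀ v : Fin 2 → ℝ, g p *ᵥ v = 0 → v = 0 := by
    intro v hv
    have hsq : ∑ i, (∑ a, v a * X a p i) * (∑ a, v a * X a p i) = 0 := by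
      have hc : ∑ i, (∑ a, v a * X a p i) * (∑ a, v a * X a p i)
          = ∑ a, v a * (g p *ᵥ v) a := by
        simp only [Matrix.mulVec, dotProduct, hg, Finset.mul_sum, Finset.sum_mul]
        rw [Finset.sum_comm]
        refine Finset.sum_congr rfl fun a _ => ?_
        rw [Finset.sum_comm]
        refine Finset.sum_congr rfl fun c _ => ?_
        refine Finset.sum_congr rfl fun i _ => ?_
        rw [hXpd, hXpd]
        ring
      rw [hc, hv]
      simp
    have hzero : ∀ i, (∑ a, v a * X a p i) = 0 := by
      intro i
      have := (Finset.sum_eq_zero_iff_of_nonneg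
        (fun i _ => mul_self_nonneg (∑ a, v a * X a p i))).mp hsq i (Finset.mem_univ i)
      exact mul_self_eq_zero.mp this
    have hli := Fintype.linearIndependent_iff.mp (himm p hp) v ?_
    · funext a; exact hli a
    · funext i
      simp only [Finset.sum_apply, Pi.smul_apply, smul_eq_mul]
      exact hzero i
  have hdet : IsUnit (g p).det := by
    rw [← Matrix.isUnit_iff_isUnit_det, ← Matrix.mulVec_injective_iff_isUnit]
    intro v w hvw
    have : g p *ᵥ (v - w) = 0 := by
      rw [Matrix.mulVec_sub, hvw, sub_self]
    have := hkey _ this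
    exact sub_eq_zero.mp this
  have hginv : g p * ((g p)⁻¹ * K p) = K p := by
    rw [← Matrix.mul_assoc, Matrix.mul_nonsing_inv _ hdet, Matrix.one_mul]
  -- the frame
  set f : Fin 3 → (Fin 3 → ℝ) := ![X 0 p, X 1 p, n p] with hfdef
  have hnf : ∀ a : Fin 2, ∑ j, n p j * X a p j = 0 := fun a => horth p hp a
  have hfli : LinearIndependent ℝ f := by
    rw [Fintype.linearIndependent_iff]
    intro c hc
    have hc' : ∀ j, c 0 * X 0 p j + c 1 * X 1 p j + c 2 * n p j = 0 := by
      intro j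
      have := congrFun hc j
      simpa [hfdef, Fin.sum_univ_three] using this
    have hc2 : c 2 = 0 := by
      have h := Finset.sum_congr rfl (fun j (_ : j ∈ Finset.univ) =>
        congrArg (fun t => n p j * t) (hc' j))
      simp only [mul_add, mul_zero, Finset.sum_add_distrib] at h
      have e0 : ∑ j, n p j * (c 0 * X 0 p j) = c 0 * ∑ j, n p j * X 0 p j := by
        rw [Finset.mul_sum]; exact Finset.sum_congr rfl fun j _ => by ring
      have e1 : ∑ j, n p j * (c 1 * X 1 p j) = c 1 * ∑ j, n p j * X 1 p j := by
        rw [Finset.mul_sum]; exact Finset.sum_congr rfl fun j _ => by ring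
      have e2 : ∑ j, n p j * (c 2 * n p j) = c 2 * ∑ j, n p j * n p j := by
        rw [Finset.mul_sum]; exact Finset.sum_congr rfl fun j _ => by ring
      rw [e0, e1, e2, hnf 0, hnf 1, hunit p hp] at h
      simpa using h
    have h12 := Fintype.linearIndependent_iff.mp (himm p hp) ![c 0, c 1] ?_
    · intro i
      fin_cases i
      · simpa using h12 0
      · simpa using h12 1
      · exact hc2
    · funext j
      have h := hc' j
      rw [hc2] at h
      simp only [Fin.sum_univ_two, Finset.sum_apply, Pi.smul_apply, smul_eq_mul,
        Matrix.cons_val_zero, Matrix.cons_val_one, Matrix.head_cons, Pi.zero_apply]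
      rw [← hXpd, ← hXpd]
      linarith
  have hspan : Submodule.span ℝ (Set.range f) = ⊤ :=
    hfli.span_eq_top_of_card_eq_finrank (by simp)
  let B : Module.Basis (Fin 3) ℝ (Fin 3 → ℝ) := Module.Basis.mk hfli (le_of_eq hspan.symm)
  -- the difference vector
  set w : Fin 3 → ℝ := pd b n p - ∑ a, ((g p)⁻¹ * K p) a b • pd a x p with hwdef
  have hw_apply : ∀ j, w j = pd b n p j - ∑ a, ((g p)⁻¹ * K p) a b * pd a x p j := by
    intro j
    simp [hwdef, Finset.sum_apply]
  have hw_n : ∑ j, n p j * w j = 0 := by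
    have hstep : ∑ j, n p j * w j
        = (∑ j, n p j * pd b n p j)
          - ∑ a, ((g p)⁻¹ * K p) a b * ∑ j, n p j * pd a x p j := by
      calc ∑ j, n p j * w j
          = ∑ j, (n p j * pd b n p j
              - ∑ a, ((g p)⁻¹ * K p) a b * (n p j * pd a x p j)) := by
            refine Finset.sum_congr rfl fun j _ => ?_
            rw [hw_apply j, mul_sub, Finset.mul_sum]
            congr 1
            exact Finset.sum_congr rfl fun a _ => by ring
        _ = (∑ j, n p j * pd b n p j)
              - ∑ j, ∑ a, ((g p)⁻¹ * K p) a b * (n p j * pd a x p j) :=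
            Finset.sum_sub_distrib _ _
        _ = (∑ j, n p j * pd b n p j)
              - ∑ a, ((g p)⁻¹ * K p) a b * ∑ j, n p j * pd a x p j := by
            rw [Finset.sum_comm]
            congr 1
            exact Finset.sum_congr rfl fun a _ => (Finset.mul_sum _ _ _).symm
    rw [hstep, hA]
    simp [horth p hp]
  have hw_e : ∀ c : Fin 2, ∑ j, pd c x p j * w j = 0 := by
    intro c
    have hS : ∑ j, pd c x p j * w j
        = (∑ j, pd c x p j * pd b n p j)
          - ∑ a, ((g p)⁻¹ * K p) a b * ∑ j, pd c x p j * pd a x p j := by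
      calc ∑ j, pd c x p j * w j
          = ∑ j, (pd c x p j * pd b n p j
              - ∑ a, ((g p)⁻¹ * K p) a b * (pd c x p j * pd a x p j)) := by
            refine Finset.sum_congr rfl fun j _ => ?_
            rw [hw_apply j, mul_sub, Finset.mul_sum]
            congr 1
            exact Finset.sum_congr rfl fun a _ => by ring
        _ = (∑ j, pd c x p j * pd b n p j)
              - ∑ j, ∑ a, ((g p)⁻¹ * K p) a b * (pd c x p j * pd a x p j) :=
            Finset.sum_sub_distrib _ _
        _ = (∑ j, pd c x p j * pd b n p j)
              - ∑ a, ((g p)⁻¹ * K p) a b * ∑ j, pd c x p j * pd a x p j := by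
            rw [Finset.sum_comm]
            congr 1
            exact Finset.sum_congr rfl fun a _ => (Finset.mul_sum _ _ _).symm
    have h1 : ∑ j, pd c x p j * pd b n p j = K p b c := by
      rw [hK p b c]
      exact Finset.sum_congr rfl fun j _ => by ring
    have h2 : ∑ a, ((g p)⁻¹ * K p) a b * ∑ j, pd c x p j * pd a x p j = K p c b := by
      have : ∀ a, ∑ j, pd c x p j * pd a x p j = g p c a := fun a => (hg p c a).symm
      calc ∑ a, ((g p)⁻¹ * K p) a b * ∑ j, pd c x p j * pd a x p j
          = ∑ a, g p c a * ((g p)⁻¹ * K p) a b := by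
            refine Finset.sum_congr rfl fun a _ => by rw [this a]; ring
        _ = (g p * ((g p)⁻¹ * K p)) c b := by rw [Matrix.mul_apply]
        _ = K p c b := by rw [hginv]
    rw [hS, h1, h2, hKsymm b c, sub_self]
  have hall : ∀ i : Fin 3, ∑ j, f i j * w j = 0 := by
    intro i
    fin_cases i
    · simpa [hfdef, hXpd] using hw_e 0
    · simpa [hfdef, hXpd] using hw_e 1
    · simpa [hfdef] using hw_n
  have hrepr : w = ∑ i, B.repr w i • f i := by
    have := B.sum_repr w
    simp only [B, Module.Basis.coe_mk] at this
    exact this.symm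
  have hwsq : ∑ j, w j * w j = 0 := by
    calc ∑ j, w j * w j = ∑ j, (∑ i, B.repr w i * f i j) * w j := by
          refine Finset.sum_congr rfl fun j _ => ?_
          congr 1
          conv_lhs => rw [hrepr]
          simp [Finset.sum_apply]
      _ = ∑ j, ∑ i, B.repr w i * (f i j * w j) := by
          refine Finset.sum_congr rfl fun j _ => ?_
          rw [Finset.sum_mul]
          exact Finset.sum_congr rfl fun i _ => by ring
      _ = ∑ i, B.repr w i * ∑ j, f i j * w j := by
          rw [Finset.sum_comm]
          exact Finset.sum_congr rfl fun i _ => (Finset.mul_sum _ _ _).symm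
      _ = 0 := by simp [hall]
  have hw0 : w = 0 := by
    funext j
    have := (Finset.sum_eq_zero_iff_of_nonneg
      (fun j _ => mul_self_nonneg (w j))).mp hwsq j (Finset.mem_univ j)
    exact mul_self_eq_zero.mp this
  have := sub_eq_zero.mp (hwdef ▸ hw0)
  exact this
end

section
/- Let U ⊆ ℝ² be open, x : U → ℝ³ a smooth immersion with smooth unit normal n. Suppose the surface is minimal, H = 0 on U, and 𝒦 ≠ 0 on U. Then 𝒦 < 0 everywhere and the first fundamental form satisfies g_{ab} = |𝒦|⁻¹ ∂_a n · ∂_b n at every point of U. -/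
open Matrix
open scoped BigOperators

private lemma fderiv_dot {f h : (Fin 2 → ℝ) → (Fin 3 → ℝ)} {p : Fin 2 → ℝ}
    (hf : DifferentiableAt ℝ f p) (hh : DifferentiableAt ℝ h p) (v : Fin 2 → ℝ) :
    fderiv ℝ (fun q => ∑ i, f q i * h q i) p v =
      ∑ i, (fderiv ℝ f p v i * h p i + f p i * fderiv ℝ h p v i) := by
  have hfi : ∀ i : Fin 3, HasFDerivAt (fun q => f q i)
      ((ContinuousLinearMap.proj i).comp (fderiv ℝ f p)) p :=
    fun i => (ContinuousLinearMap.proj (R := ℝ) (φ := fun _ : Fin 3 => ℝ) i).hasFDerivAt.comp p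
      hf.hasFDerivAt
  have hhi : ∀ i : Fin 3, HasFDerivAt (fun q => h q i)
      ((ContinuousLinearMap.proj i).comp (fderiv ℝ h p)) p :=
    fun i => (ContinuousLinearMap.proj (R := ℝ) (φ := fun _ : Fin 3 => ℝ) i).hasFDerivAt.comp p
      hh.hasFDerivAt
  have hs : HasFDerivAt (fun q => ∑ i, f q i * h q i)
      (∑ i : Fin 3, (f p i • (ContinuousLinearMap.proj i).comp (fderiv ℝ h p)
        + h p i • (ContinuousLinearMap.proj i).comp (fderiv ℝ f p))) p :=
    HasFDerivAt.fun_sum fun i _ => (hfi i).mul (hhi i)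
  rw [hs.fderiv]
  simp only [ContinuousLinearMap.sum_apply, ContinuousLinearMap.add_apply,
    ContinuousLinearMap.smul_apply, ContinuousLinearMap.coe_comp', Function.comp_apply,
    ContinuousLinearMap.proj_apply, smul_eq_mul]
  exact Finset.sum_congr rfl fun i _ => by ring

/-- For a minimal surface (`H = 0`) with nonvanishing Gaussian curvature:
`𝒦 < 0` and `g_{ab} = |𝒦|⁻¹ ∂_a n · ∂_b n`. -/
theorem minimal_surface_metric (U : Set (Fin 2 → ℝ)) (hU : IsOpen U)
    (x n : (Fin 2 → ℝ) → (Fin 3 → ℝ))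
    (hx : ContDiffOn ℝ (⊤ : ℕ∞) x U) (hn : ContDiffOn ℝ (⊤ : ℕ∞) n U)
    (himm : ∀ p ∈ U, LinearIndependent ℝ (fun a : Fin 2 => pd a x p))
    (hunit : ∀ p ∈ U, ∑ i, n p i * n p i = 1)
    (horth : ∀ p ∈ U, ∀ a : Fin 2, ∑ i, n p i * pd a x p i = 0)
    (g : (Fin 2 → ℝ) → Matrix (Fin 2) (Fin 2) ℝ)
    (hg : ∀ p a b, g p a b = ∑ i, pd a x p i * pd b x p i)
    (K : (Fin 2 → ℝ) → Matrix (Fin 2) (Fin 2) ℝ)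
    (hK : ∀ p a b, K p a b = ∑ i, pd a n p i * pd b x p i)
    (H : (Fin 2 → ℝ) → ℝ) (hH : ∀ p, H p = Matrix.trace ((g p)⁻¹ * K p))
    (𝒦 : (Fin 2 → ℝ) → ℝ) (h𝒦 : ∀ p, 𝒦 p = Matrix.det ((g p)⁻¹ * K p))
    (hmin : ∀ p ∈ U, H p = 0) (hK0 : ∀ p ∈ U, 𝒦 p ≠ 0) :
    ∀ p ∈ U, 𝒦 p < 0 ∧
      ∀ a b : Fin 2, g p a b = |𝒦 p|⁻¹ * ∑ i, pd a n p i * pd b n p i := by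
  intro p hp
  have hpU : U ∈ nhds p := hU.mem_nhds hp
  have hxp : ContDiffAt ℝ (⊤ : ℕ∞) x p := hx.contDiffAt hpU
  have hnp : ContDiffAt ℝ (⊤ : ℕ∞) n p := hn.contDiffAt hpU
  have hnd : DifferentiableAt ℝ n p := hnp.differentiableAt (by simp)
  have hdfx : DifferentiableAt ℝ (fderiv ℝ x) p :=
    (hxp.fderiv_right (m := 1) (WithTop.coe_le_coe.mpr le_top)).differentiableAt one_ne_zero
  have hpdx : ∀ b : Fin 2, DifferentiableAt ℝ (pd b x) p := fun b =>
    hdfx.clm_apply (differentiableAt_const _)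
  have hsecond : ∀ a b : Fin 2, fderiv ℝ (pd b x) p (Pi.single a 1)
      = fderiv ℝ (fderiv ℝ x) p (Pi.single a 1) (Pi.single b 1) := by
    intro a b
    rw [show (pd b x) = fun q => fderiv ℝ x q (Pi.single b 1) from rfl,
      fderiv_clm_apply hdfx (differentiableAt_const _)]
    simp
  have hsymx : IsSymmSndFDerivAt ℝ x p := hxp.isSymmSndFDerivAt (by rw [minSmoothness_of_isRCLikeNormedField]; exact WithTop.coe_le_coe.mpr le_top)
  have hcomm : ∀ u v : Fin 3 → ℝ, ∑ i, u i * v i = ∑ i, v i * u i :=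
    fun u v => Finset.sum_congr rfl fun i _ => mul_comm _ _
  -- Step A : n · ∂ₐn = 0
  have hA : ∀ a : Fin 2, ∑ i, n p i * pd a n p i = 0 := by
    intro a
    have hev : (fun q => ∑ i, n q i * n q i) =ᶠ[nhds p] fun _ => (1:ℝ) :=
      Filter.eventuallyEq_of_mem hpU fun q hq => hunit q hq
    have h0 : fderiv ℝ (fun q => ∑ i, n q i * n q i) p = 0 := by
      rw [hev.fderiv_eq]; exact fderiv_const_apply 1
    have hd := fderiv_dot hnd hnd (Pi.single a 1)
    rw [h0] at hd
    simp only [ContinuousLinearMap.zero_apply] at hd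
    have hd' : (0:ℝ) = ∑ i, (pd a n p i * n p i + n p i * pd a n p i) := hd
    have hsum : ∑ i, (pd a n p i * n p i + n p i * pd a n p i)
        = 2 * ∑ i, n p i * pd a n p i := by
      rw [Finset.sum_add_distrib, two_mul]
      congr 1
      exact hcomm _ _
    linarith [hd', hsum]
  -- Step B : K symmetric
  have hBder : ∀ a b : Fin 2, (0:ℝ) = ∑ i, (pd a n p i * pd b x p i
      + n p i * fderiv ℝ (fderiv ℝ x) p (Pi.single a 1) (Pi.single b 1) i) := by
    intro a b
    have hev : (fun q => ∑ i, n q i * pd b x q i) =ᶠ[nhds p] fun _ => (0:ℝ) :=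
      Filter.eventuallyEq_of_mem hpU fun q hq => horth q hq b
    have h0 : fderiv ℝ (fun q => ∑ i, n q i * pd b x q i) p = 0 := by
      rw [hev.fderiv_eq]; exact fderiv_const_apply 0
    have hd := fderiv_dot hnd (hpdx b) (Pi.single a 1)
    rw [h0] at hd
    simp only [ContinuousLinearMap.zero_apply] at hd
    rw [← hsecond a b]
    exact hd
  have hKsym : K p 0 1 = K p 1 0 := by
    have h1 := hBder 0 1
    have h2 := hBder 1 0
    rw [Finset.sum_add_distrib] at h1 h2
    have h3 : ∑ i, n p i * fderiv ℝ (fderiv ℝ x) p (Pi.single (0:Fin 2) 1) (Pi.single (1:Fin 2) 1) i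
        = ∑ i, n p i * fderiv ℝ (fderiv ℝ x) p (Pi.single (1:Fin 2) 1) (Pi.single (0:Fin 2) 1) i := by
      rw [hsymx (Pi.single (0:Fin 2) 1) (Pi.single (1:Fin 2) 1)]
    rw [hK, hK]
    linarith
  -- dot helper
  have hdot3 : ∀ (c0 c1 c2 : ℝ) (u0 u1 u2 w : Fin 3 → ℝ),
      ∑ i, (c0 * u0 i + c1 * u1 i + c2 * u2 i) * w i
        = c0 * ∑ i, u0 i * w i + c1 * ∑ i, u1 i * w i + c2 * ∑ i, u2 i * w i := by
    intro c0 c1 c2 u0 u1 u2 w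
    rw [Finset.mul_sum, Finset.mul_sum, Finset.mul_sum, ← Finset.sum_add_distrib,
      ← Finset.sum_add_distrib]
    exact Finset.sum_congr rfl fun i _ => by ring
  have horthn : ∀ a : Fin 2, ∑ i, n p i * pd a x p i = 0 := fun a => horth p hp a
  have hone := hunit p hp
  -- linear independence of the frame
  have hli3 : LinearIndependent ℝ ![pd 0 x p, pd 1 x p, n p] := by
    rw [Fintype.linearIndependent_iff]
    intro c hc
    have hc' : ∀ i, c 0 * pd 0 x p i + c 1 * pd 1 x p i + c 2 * n p i = 0 := by
      intro i
      have := congrFun hc i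
      simpa [Fin.sum_univ_three] using this
    have hc2 : c 2 = 0 := by
      have hz : ∑ i, (c 0 * pd 0 x p i + c 1 * pd 1 x p i + c 2 * n p i) * n p i = 0 :=
        Finset.sum_eq_zero fun i _ => by rw [hc' i, zero_mul]
      rw [hdot3, hcomm (pd 0 x p) (n p), hcomm (pd 1 x p) (n p), horthn 0, horthn 1, hone] at hz
      linarith
    have hc01 := Fintype.linearIndependent_iff.mp (himm p hp) ![c 0, c 1] (by
      funext i
      simp only [Fin.sum_univ_two, Matrix.cons_val_zero, Matrix.cons_val_one, Matrix.head_cons,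
        Pi.add_apply, Pi.smul_apply, smul_eq_mul, Pi.zero_apply]
      have := hc' i
      rw [hc2] at this
      linarith)
    intro j
    fin_cases j
    · simpa using hc01 0
    · simpa using hc01 1
    · exact hc2
  have hspan : Submodule.span ℝ (Set.range ![pd 0 x p, pd 1 x p, n p]) = ⊤ :=
    hli3.span_eq_top_of_card_eq_finrank (by simp)
  have hw : ∀ a : Fin 2, ∃ w0 w1 : ℝ, ∀ i, pd a n p i = w0 * pd 0 x p i + w1 * pd 1 x p i := by
    intro a
    have hm : pd a n p ∈ Submodule.span ℝ (Set.range ![pd 0 x p, pd 1 x p, n p]) := by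
      rw [hspan]; exact Submodule.mem_top
    obtain ⟨c, hc⟩ := (Submodule.mem_span_range_iff_exists_fun ℝ).mp hm
    have hc' : ∀ i, c 0 * pd 0 x p i + c 1 * pd 1 x p i + c 2 * n p i = pd a n p i := by
      intro i
      have := congrFun hc i
      simpa [Fin.sum_univ_three] using this
    have hc2 : c 2 = 0 := by
      have hz : ∑ i, (c 0 * pd 0 x p i + c 1 * pd 1 x p i + c 2 * n p i) * n p i
          = ∑ i, pd a n p i * n p i := Finset.sum_congr rfl fun i _ => by rw [hc' i]
      rw [hdot3, hcomm (pd 0 x p) (n p), hcomm (pd 1 x p) (n p), horthn 0, horthn 1, hone,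
        hcomm (pd a n p) (n p), hA a] at hz
      linarith
    exact ⟨c 0, c 1, fun i => by have := hc' i; rw [hc2] at this; linarith⟩
  obtain ⟨w00, w01, hw0⟩ := hw 0
  obtain ⟨w10, w11, hw1⟩ := hw 1
  have himm := himm p hp
  have htr : Matrix.trace ((g p)⁻¹ * K p) = 0 := by rw [← hH]; exact hmin p hp
  have hdet : 𝒦 p = Matrix.det ((g p)⁻¹ * K p) := h𝒦 p
  have hK0 : 𝒦 p ≠ 0 := hK0 p hp
  have hGsym : g p 1 0 = g p 0 1 := by rw [hg, hg]; exact hcomm _ _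
  -- positivity of the metric
  have hsumpos : ∀ v : Fin 3 → ℝ, v ≠ 0 → 0 < ∑ i, v i * v i := by
    intro v hv
    have hne : ∃ i, v i ≠ 0 := by
      by_contra h; push_neg at h; exact hv (funext fun i => h i)
    obtain ⟨i, hi⟩ := hne
    exact Finset.sum_pos' (fun j _ => mul_self_nonneg _)
      ⟨i, Finset.mem_univ i, mul_self_pos.mpr hi⟩
  have hApos : 0 < g p 0 0 := by
    rw [hg]; exact hsumpos _ (himm.ne_zero 0)
  have hu : (fun i => g p 0 0 * pd 1 x p i - g p 0 1 * pd 0 x p i) ≠ 0 := by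
    intro h
    have hcoef := Fintype.linearIndependent_iff.mp himm ![-(g p 0 1), g p 0 0] (by
      funext i
      have := congrFun h i
      simp only [Pi.zero_apply] at this
      simp only [Fin.sum_univ_two, Matrix.cons_val_zero, Matrix.cons_val_one, Matrix.head_cons,
        Pi.add_apply, Pi.smul_apply, smul_eq_mul, Pi.zero_apply]
      linarith)
    have := hcoef 1
    simp only [Matrix.cons_val_one, Matrix.head_cons] at this
    exact absurd this (ne_of_gt hApos)
  have hQ := hsumpos _ hu
  have hexp : ∑ i, (g p 0 0 * pd 1 x p i - g p 0 1 * pd 0 x p i)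
      * (g p 0 0 * pd 1 x p i - g p 0 1 * pd 0 x p i)
      = g p 0 0 * (g p 0 0 * g p 1 1 - g p 0 1 * g p 0 1) := by
    have h1 : ∀ i, (g p 0 0 * pd 1 x p i - g p 0 1 * pd 0 x p i)
        * (g p 0 0 * pd 1 x p i - g p 0 1 * pd 0 x p i)
        = (g p 0 0 * g p 0 0) * (pd 1 x p i * pd 1 x p i)
          - (2 * g p 0 0 * g p 0 1) * (pd 0 x p i * pd 1 x p i)
          + (g p 0 1 * g p 0 1) * (pd 0 x p i * pd 0 x p i) := fun i => by ring
    rw [Finset.sum_congr rfl fun i _ => h1 i]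
    rw [Finset.sum_add_distrib, Finset.sum_sub_distrib, ← Finset.mul_sum, ← Finset.mul_sum,
      ← Finset.mul_sum, ← hg, ← hg, ← hg]
    ring
  rw [hexp] at hQ
  have hDpos : 0 < g p 0 0 * g p 1 1 - g p 0 1 * g p 0 1 := by nlinarith
  have hdet_ne : (g p).det ≠ 0 := by
    rw [Matrix.det_fin_two, hGsym]
    nlinarith
  -- K entries in terms of w
  have hK00 : K p 0 0 = w00 * g p 0 0 + w01 * g p 1 0 := by
    rw [hK, hg p 0 0, hg p 1 0, Finset.mul_sum, Finset.mul_sum, ← Finset.sum_add_distrib]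
    exact Finset.sum_congr rfl fun i _ => by rw [hw0 i]; ring
  have hK01 : K p 0 1 = w00 * g p 0 1 + w01 * g p 1 1 := by
    rw [hK, hg p 0 1, hg p 1 1, Finset.mul_sum, Finset.mul_sum, ← Finset.sum_add_distrib]
    exact Finset.sum_congr rfl fun i _ => by rw [hw0 i]; ring
  have hK10 : K p 1 0 = w10 * g p 0 0 + w11 * g p 1 0 := by
    rw [hK, hg p 0 0, hg p 1 0, Finset.mul_sum, Finset.mul_sum, ← Finset.sum_add_distrib]
    exact Finset.sum_congr rfl fun i _ => by rw [hw1 i]; ring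
  have hK11 : K p 1 1 = w10 * g p 0 1 + w11 * g p 1 1 := by
    rw [hK, hg p 0 1, hg p 1 1, Finset.mul_sum, Finset.mul_sum, ← Finset.sum_add_distrib]
    exact Finset.sum_congr rfl fun i _ => by rw [hw1 i]; ring
  have hKW : K p = !![w00, w01; w10, w11] * g p := by
    ext a b
    rw [Matrix.mul_apply, Fin.sum_univ_two]
    revert a b
    simp only [Fin.forall_fin_two]
    refine ⟨⟨?_, ?_⟩, ?_, ?_⟩ <;> simp only [Matrix.cons_val', Matrix.cons_val_zero,
      Matrix.cons_val_one, Matrix.head_cons, Matrix.empty_val', Matrix.cons_val_fin_one,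
      Matrix.of_apply]
    exacts [hK00, hK01, hK10, hK11]
  have hIu : IsUnit (g p).det := isUnit_iff_ne_zero.mpr hdet_ne
  have htrW : w00 + w11 = 0 := by
    have h1 := htr
    rw [hKW, Matrix.trace_mul_comm, Matrix.mul_assoc, Matrix.mul_nonsing_inv _ hIu,
      Matrix.mul_one] at h1
    simpa [Matrix.trace_fin_two] using h1
  have hdetW : 𝒦 p = w00 * w11 - w01 * w10 := by
    rw [hdet, hKW, Matrix.det_mul, Matrix.det_mul, Matrix.det_nonsing_inv,
      Matrix.det_fin_two_of, Ring.inverse_eq_inv']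
    field_simp
  have hW11 : w11 = -w00 := by linarith
  subst hW11
  have hsymS : w00 * g p 0 1 + w01 * g p 1 1 = w10 * g p 0 0 + -w00 * g p 1 0 := by
    rw [← hK01, ← hK10, hKsym]
  -- M expansion
  have e00 : ∑ i, pd 0 n p i * pd 0 n p i
      = w00*w00*g p 0 0 + w00*w01*g p 0 1 + w01*w00*g p 1 0 + w01*w01*g p 1 1 := by
    rw [hg p 0 0, hg p 0 1, hg p 1 0, hg p 1 1]
    rw [Finset.mul_sum, Finset.mul_sum, Finset.mul_sum, Finset.mul_sum,
      ← Finset.sum_add_distrib, ← Finset.sum_add_distrib, ← Finset.sum_add_distrib]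
    exact Finset.sum_congr rfl fun i _ => by rw [hw0 i]; ring
  have e01 : ∑ i, pd 0 n p i * pd 1 n p i
      = w00*w10*g p 0 0 + w00*(-w00)*g p 0 1 + w01*w10*g p 1 0 + w01*(-w00)*g p 1 1 := by
    rw [hg p 0 0, hg p 0 1, hg p 1 0, hg p 1 1]
    rw [Finset.mul_sum, Finset.mul_sum, Finset.mul_sum, Finset.mul_sum,
      ← Finset.sum_add_distrib, ← Finset.sum_add_distrib, ← Finset.sum_add_distrib]
    exact Finset.sum_congr rfl fun i _ => by rw [hw0 i, hw1 i]; ring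
  have e10 : ∑ i, pd 1 n p i * pd 0 n p i
      = w10*w00*g p 0 0 + w10*w01*g p 0 1 + (-w00)*w00*g p 1 0 + (-w00)*w01*g p 1 1 := by
    rw [hg p 0 0, hg p 0 1, hg p 1 0, hg p 1 1]
    rw [Finset.mul_sum, Finset.mul_sum, Finset.mul_sum, Finset.mul_sum,
      ← Finset.sum_add_distrib, ← Finset.sum_add_distrib, ← Finset.sum_add_distrib]
    exact Finset.sum_congr rfl fun i _ => by rw [hw0 i, hw1 i]; ring
  have e11 : ∑ i, pd 1 n p i * pd 1 n p i
      = w10*w10*g p 0 0 + w10*(-w00)*g p 0 1 + (-w00)*w10*g p 1 0 + w00*w00*g p 1 1 := by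
    rw [hg p 0 0, hg p 0 1, hg p 1 0, hg p 1 1]
    rw [Finset.mul_sum, Finset.mul_sum, Finset.mul_sum, Finset.mul_sum,
      ← Finset.sum_add_distrib, ← Finset.sum_add_distrib, ← Finset.sum_add_distrib]
    exact Finset.sum_congr rfl fun i _ => by rw [hw1 i]; ring
  have hM : ∀ a b : Fin 2, ∑ i, pd a n p i * pd b n p i = -𝒦 p * g p a b := by
    simp only [Fin.forall_fin_two]
    refine ⟨⟨?_, ?_⟩, ?_, ?_⟩
    · rw [e00]; linear_combination g p 0 0 * hdetW + w01 * hsymS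
    · rw [e01]; linear_combination g p 0 1 * hdetW + (-w00) * hsymS + (w01*w10 + w00*w00) * hGsym
    · rw [e10]; linear_combination g p 1 0 * hdetW + (-w00) * hsymS - (w00*w00 + w01*w10) * hGsym
    · rw [e11]; linear_combination g p 1 1 * hdetW + (-w10) * hsymS
  have hKneg : 𝒦 p < 0 := by
    have h1 : 0 ≤ ∑ i, pd 0 n p i * pd 0 n p i := Finset.sum_nonneg fun i _ => mul_self_nonneg _
    have h2 := hM 0 0
    rcases lt_or_gt_of_ne hK0 with h | h
    · exact h
    · nlinarith
  refine ⟨hKneg, fun a b => ?_⟩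
  rw [abs_of_neg hKneg, hM a b]
  exact (inv_mul_cancel_left₀ (by linarith : -𝒦 p ≠ 0) _).symm
end

section
/- Let U ⊆ ℝ² be open, x : U → ℝ³ a smooth immersion with smooth unit normal n. Then the Codazzi–Mainardi equations hold: for all a,b,c ∈ {1,2} and all points of U, ∂_c K_{ab} − Σ_d Γ^d_{ca} K_{db} = ∂_b K_{ac} − Σ_d Γ^d_{ba} K_{dc} (i.e. the covariant derivative ∇_c K_{ab} with respect to g is totally symmetric in b and c). -/
open Matrix
open scoped BigOperators Topology

section Helpers
variable {E : Type*} [NormedAddCommGroup E] [NormedSpace ℝ E]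
variable {p : Fin 2 → ℝ} {a b : Fin 2}

lemma pd_congr {f h : (Fin 2 → ℝ) → E} (hfh : f =ᶠ[𝓝 p] h) (a : Fin 2) :
    pd a f p = pd a h p := by
  unfold pd; rw [hfh.fderiv_eq]

lemma pd_const (c : E) : pd a (fun _ => c) p = 0 := by
  unfold pd; rw [fderiv_fun_const]; rfl

lemma pd_sum {ι : Type*} (s : Finset ι) (f : ι → (Fin 2 → ℝ) → ℝ)
    (hf : ∀ i ∈ s, DifferentiableAt ℝ (f i) p) :
    pd a (fun q => ∑ i ∈ s, f i q) p = ∑ i ∈ s, pd a (f i) p := by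
  unfold pd; rw [fderiv_fun_sum hf]; simp

lemma pd_mul {f h : (Fin 2 → ℝ) → ℝ} (hf : DifferentiableAt ℝ f p)
    (hh : DifferentiableAt ℝ h p) :
    pd a (fun q => f q * h q) p = pd a f p * h p + f p * pd a h p := by
  unfold pd; rw [fderiv_fun_mul hf hh]; simp; ring

lemma pd_neg {f : (Fin 2 → ℝ) → ℝ} :
    pd a (fun q => -(f q)) p = -(pd a f p) := by
  unfold pd; rw [fderiv_fun_neg]; simp

lemma pd_apply {ι : Type*} [Fintype ι] {f : (Fin 2 → ℝ) → (ι → ℝ)}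
    (hf : DifferentiableAt ℝ f p) (i : ι) :
    pd a (fun q => f q i) p = pd a f p i := by
  unfold pd
  have h : (fun q => f q i) = (ContinuousLinearMap.proj (R := ℝ) (φ := fun _ : ι => ℝ) i) ∘ f := rfl
  rw [h, fderiv_comp p (ContinuousLinearMap.differentiableAt _) hf]
  simp

lemma diff_apply {ι : Type*} [Fintype ι] {f : (Fin 2 → ℝ) → (ι → ℝ)}
    (hf : DifferentiableAt ℝ f p) (i : ι) :
    DifferentiableAt ℝ (fun q => f q i) p :=
  ((ContinuousLinearMap.proj (R := ℝ) (φ := fun _ : ι => ℝ) i).differentiableAt).comp p hf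

lemma contDiffAt_pd {f : (Fin 2 → ℝ) → E} (hf : ContDiffAt ℝ (⊤ : ℕ∞) f p) (b : Fin 2) :
    ContDiffAt ℝ (⊤ : ℕ∞) (fun q => pd b f q) p := by
  have h1 : ContDiffAt ℝ (⊤ : ℕ∞) (fderiv ℝ f) p := hf.fderiv_right (by simp)
  have h2 : (fun q => pd b f q) =
      (ContinuousLinearMap.apply ℝ E (Pi.single b 1)) ∘ (fderiv ℝ f) := rfl
  rw [h2]
  exact ((ContinuousLinearMap.apply ℝ E (Pi.single b 1)).contDiff.contDiffAt).comp p h1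

lemma pd_comm {f : (Fin 2 → ℝ) → E} (hf : ContDiffAt ℝ (⊤ : ℕ∞) f p) (a b : Fin 2) :
    pd a (fun q => pd b f q) p = pd b (fun q => pd a f q) p := by
  have hsym : IsSymmSndFDerivAt ℝ f p := hf.isSymmSndFDerivAt (by simp only [minSmoothness_of_isRCLikeNormedField]; exact WithTop.coe_le_coe.mpr (le_top : (2:ℕ∞) ≤ ⊤))
  have hd : DifferentiableAt ℝ (fderiv ℝ f) p :=
    (hf.fderiv_right (m := (⊤ : ℕ∞)) (by simp)).differentiableAt (by simp)
  have key : ∀ v w : Fin 2 → ℝ,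
      fderiv ℝ (fun q => fderiv ℝ f q w) p v = fderiv ℝ (fderiv ℝ f) p v w := by
    intro v w
    have h : (fun q => fderiv ℝ f q w) =
        (ContinuousLinearMap.apply ℝ E w) ∘ (fderiv ℝ f) := rfl
    rw [h, fderiv_comp p (ContinuousLinearMap.differentiableAt _) hd]
    simp
  unfold pd
  rw [key, key, hsym]

end Helpers

lemma gram_isUnit {X : Fin 2 → Fin 3 → ℝ} (hli : LinearIndependent ℝ X)
    {G : Matrix (Fin 2) (Fin 2) ℝ} (hG : ∀ a b, G a b = ∑ i, X a i * X b i) :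
    IsUnit G.det := by
  rw [← Matrix.isUnit_iff_isUnit_det, ← Matrix.mulVec_injective_iff_isUnit]
  have h0 : ∀ v, G.mulVec v = 0 → v = 0 := by
    intro v hv
    have h1 : v ⬝ᵥ G.mulVec v = 0 := by rw [hv]; simp
    have h2 : (∑ i : Fin 3, (∑ a, v a * X a i)^2) = 0 := by
      rw [← h1]
      simp only [dotProduct, Matrix.mulVec, dotProduct, hG,
        Fin.sum_univ_two, Fin.sum_univ_three]
      ring
    have h3 : ∀ i : Fin 3, (∑ a, v a * X a i)^2 = 0 := by
      have h := (Finset.sum_eq_zero_iff_of_nonneg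
        (fun i (_ : i ∈ Finset.univ) => sq_nonneg (∑ a, v a * X a i))).mp h2
      exact fun i => h i (Finset.mem_univ i)
    have h4 : ∑ a, v a • X a = 0 := by
      funext i
      have h := pow_eq_zero_iff (n := 2) (by norm_num) |>.mp (h3 i)
      simpa [Finset.sum_apply] using h
    exact funext (Fintype.linearIndependent_iff.mp hli v h4)
  intro u v huv
  have h := h0 (u - v) (by rw [Matrix.mulVec_sub, huv, sub_self])
  exact sub_eq_zero.mp h

lemma perp_eq_zero {B : Fin 3 → Fin 3 → ℝ} (hli : LinearIndependent ℝ B)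
    {w : Fin 3 → ℝ} (hw : ∀ j, ∑ i, B j i * w i = 0) : w = 0 := by
  have hM : IsUnit (Matrix.of B) := Matrix.linearIndependent_rows_iff_isUnit.mp hli
  have hinj := Matrix.mulVec_injective_iff_isUnit.mpr hM
  have h : (Matrix.of B).mulVec w = (Matrix.of B).mulVec 0 := by
    funext j
    simp [Matrix.mulVec, dotProduct, hw j]
  exact hinj h

lemma perp3 {X : Fin 2 → Fin 3 → ℝ} {N w : Fin 3 → ℝ}
    (hli : LinearIndependent ℝ X)
    (hNX : ∀ a, ∑ i, N i * X a i = 0) (hNN : ∑ i, N i * N i = 1)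
    (hwX : ∀ a, ∑ i, X a i * w i = 0) (hwN : ∑ i, N i * w i = 0) : w = 0 := by
  have hBli : LinearIndependent ℝ ![X 0, X 1, N] := by
    rw [Fintype.linearIndependent_iff]
    intro l hl
    have hfun : ∀ i, l 0 * X 0 i + l 1 * X 1 i + l 2 * N i = 0 := by
      intro i
      have h := congrFun hl i
      simpa [Fin.sum_univ_three, Matrix.cons_val_zero, Matrix.cons_val_one] using h
    have hl2 : l 2 = 0 := by
      have h : (∑ i, (l 0 * X 0 i + l 1 * X 1 i + l 2 * N i) * N i) = 0 :=
        Finset.sum_eq_zero fun i _ => by rw [hfun i]; ring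
      have e : (∑ i, (l 0 * X 0 i + l 1 * X 1 i + l 2 * N i) * N i)
          = l 0 * (∑ i, N i * X 0 i) + l 1 * (∑ i, N i * X 1 i)
            + l 2 * (∑ i, N i * N i) := by
        simp only [Fin.sum_univ_three]; ring
      rw [e, hNX 0, hNX 1, hNN] at h
      linarith
    have hl01 := Fintype.linearIndependent_iff.mp hli ![l 0, l 1] (by
      funext i
      have h := hfun i
      rw [hl2] at h
      simpa [Fin.sum_univ_two] using (by linarith : l 0 * X 0 i + l 1 * X 1 i = 0))
    intro j
    fin_cases j
    · simpa using hl01 0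
    · simpa using hl01 1
    · exact hl2
  apply perp_eq_zero hBli
  intro j
  fin_cases j
  · simpa using hwX 0
  · simpa using hwX 1
  · simpa using hwN

/-- **Codazzi–Mainardi equations**:
`∂_c K_{ab} − Σ_d Γ^d_{ca} K_{db} = ∂_b K_{ac} − Σ_d Γ^d_{ba} K_{dc}`. -/
theorem codazzi_mainardi (U : Set (Fin 2 → ℝ)) (hU : IsOpen U)
    (x n : (Fin 2 → ℝ) → (Fin 3 → ℝ))
    (hx : ContDiffOn ℝ (⊤ : ℕ∞) x U) (hn : ContDiffOn ℝ (⊤ : ℕ∞) n U)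
    (himm : ∀ p ∈ U, LinearIndependent ℝ (fun a : Fin 2 => pd a x p))
    (hunit : ∀ p ∈ U, ∑ i, n p i * n p i = 1)
    (horth : ∀ p ∈ U, ∀ a : Fin 2, ∑ i, n p i * pd a x p i = 0)
    (g : (Fin 2 → ℝ) → Matrix (Fin 2) (Fin 2) ℝ)
    (hg : ∀ p a b, g p a b = ∑ i, pd a x p i * pd b x p i)
    (K : (Fin 2 → ℝ) → Matrix (Fin 2) (Fin 2) ℝ)
    (hK : ∀ p a b, K p a b = ∑ i, pd a n p i * pd b x p i)
    (Γ : (Fin 2 → ℝ) → Fin 2 → Fin 2 → Fin 2 → ℝ)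
    (hΓ : ∀ p c a b, Γ p c a b = (1/2) * ∑ d, (g p)⁻¹ c d *
      (pd a (fun q => g q d b) p + pd b (fun q => g q d a) p - pd d (fun q => g q a b) p)) :
    ∀ a b c : Fin 2, ∀ p ∈ U,
      pd c (fun q => K q a b) p - ∑ d, Γ p d c a * K p d b =
        pd b (fun q => K q a c) p - ∑ d, Γ p d b a * K p d c := by
  intro a b c p hp
  -- basic smoothness / differentiability facts
  have hxq : ∀ q ∈ U, ContDiffAt ℝ (⊤ : ℕ∞) x q := fun q hq => (hx q hq).contDiffAt (hU.mem_nhds hq)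
  have hnq : ∀ q ∈ U, ContDiffAt ℝ (⊤ : ℕ∞) n q := fun q hq => (hn q hq).contDiffAt (hU.mem_nhds hq)
  have dx : ∀ q ∈ U, DifferentiableAt ℝ x q := fun q hq => (hxq q hq).differentiableAt (by simp)
  have dn : ∀ q ∈ U, DifferentiableAt ℝ n q := fun q hq => (hnq q hq).differentiableAt (by simp)
  have cdpdx : ∀ q ∈ U, ∀ e : Fin 2, ContDiffAt ℝ (⊤ : ℕ∞) (fun r => pd e x r) q :=
    fun q hq e => contDiffAt_pd (hxq q hq) e
  have dpdx : ∀ q ∈ U, ∀ e : Fin 2, DifferentiableAt ℝ (fun r => pd e x r) q :=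
    fun q hq e => (cdpdx q hq e).differentiableAt (by simp)
  have dpdpdx : ∀ q ∈ U, ∀ e f : Fin 2,
      DifferentiableAt ℝ (fun r => pd e (fun s => pd f x s) r) q :=
    fun q hq e f => (contDiffAt_pd (cdpdx q hq f) e).differentiableAt (by simp)
  have dpdn : ∀ q ∈ U, ∀ e : Fin 2, DifferentiableAt ℝ (fun r => pd e n r) q :=
    fun q hq e => (contDiffAt_pd (hnq q hq) e).differentiableAt (by simp)
  -- Clairaut symmetry of second derivatives of x, on U
  have XXsym : ∀ q ∈ U, ∀ e f : Fin 2,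
      pd e (fun r => pd f x r) q = pd f (fun r => pd e x r) q :=
    fun q hq e f => pd_comm (hxq q hq) e f
  -- K in normal-component form on U
  have hKn : ∀ q ∈ U, ∀ e f : Fin 2,
      K q e f = -∑ i, n q i * pd e (fun r => pd f x r) q i := by
    intro q hq e f
    have hz : pd e (fun r => ∑ i, n r i * pd f x r i) q = 0 := by
      have hev : (fun r => ∑ i, n r i * pd f x r i) =ᶠ[𝓝 q] (fun _ => (0:ℝ)) :=
        Filter.eventuallyEq_of_mem (hU.mem_nhds hq) (fun r hr => horth r hr f)
      rw [pd_congr hev, pd_const]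
    have hexp : pd e (fun r => ∑ i, n r i * pd f x r i) q
        = ∑ i, (pd e n q i * pd f x q i + n q i * pd e (fun r => pd f x r) q i) := by
      rw [pd_sum _ _ (fun i _ => (diff_apply (dn q hq) i).fun_mul (diff_apply (dpdx q hq f) i))]
      refine Finset.sum_congr rfl fun i _ => ?_
      rw [pd_mul (diff_apply (dn q hq) i) (diff_apply (dpdx q hq f) i),
        pd_apply (dn q hq) i, pd_apply (dpdx q hq f) i]
    rw [hexp, Finset.sum_add_distrib] at hz
    rw [hK q e f]
    linarith
  -- K symmetric at p
  have Ksym : ∀ e f : Fin 2, K p e f = K p f e := by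
    intro e f
    rw [hKn p hp e f, hKn p hp f e, XXsym p hp e f]
  -- third derivative symmetry
  have hE : pd c (fun q => pd a (fun r => pd b x r) q) p
      = pd b (fun q => pd a (fun r => pd c x r) q) p := by
    have e1 : (fun q => pd a (fun r => pd b x r) q)
        =ᶠ[𝓝 p] (fun q => pd b (fun r => pd a x r) q) :=
      Filter.eventuallyEq_of_mem (hU.mem_nhds hp) (fun q hq => XXsym q hq a b)
    have e2 : (fun q => pd c (fun r => pd a x r) q)
        =ᶠ[𝓝 p] (fun q => pd a (fun r => pd c x r) q) :=
      Filter.eventuallyEq_of_mem (hU.mem_nhds hp) (fun q hq => XXsym q hq c a)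
    rw [pd_congr e1 c, pd_comm (cdpdx p hp a) c b, pd_congr e2 b]
  -- derivative of K
  have hdK : ∀ e f h : Fin 2, pd h (fun q => K q e f) p
      = -∑ i, (pd h n p i * pd e (fun r => pd f x r) p i
          + n p i * pd h (fun q => pd e (fun r => pd f x r) q) p i) := by
    intro e f h
    have hev : (fun q => K q e f)
        =ᶠ[𝓝 p] (fun q => -∑ i, n q i * pd e (fun r => pd f x r) q i) :=
      Filter.eventuallyEq_of_mem (hU.mem_nhds hp) (fun q hq => hKn q hq e f)
    rw [pd_congr hev h, pd_neg, pd_sum _ _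
      (fun i _ => (diff_apply (dn p hp) i).fun_mul (diff_apply (dpdpdx p hp e f) i))]
    refine neg_inj.mpr (Finset.sum_congr rfl fun i _ => ?_)
    rw [pd_mul (diff_apply (dn p hp) i) (diff_apply (dpdpdx p hp e f) i),
      pd_apply (dn p hp) i, pd_apply (dpdpdx p hp e f) i]
  -- derivative of g
  have hdg : ∀ e d f : Fin 2, pd e (fun q => g q d f) p
      = ∑ i, (pd e (fun r => pd d x r) p i * pd f x p i
          + pd d x p i * pd e (fun r => pd f x r) p i) := by
    intro e d f
    have hfe : (fun q => g q d f) = (fun q => ∑ i, pd d x q i * pd f x q i) :=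
      funext fun q => hg q d f
    rw [hfe, pd_sum _ _
      (fun i _ => (diff_apply (dpdx p hp d) i).fun_mul (diff_apply (dpdx p hp f) i))]
    refine Finset.sum_congr rfl fun i _ => ?_
    rw [pd_mul (diff_apply (dpdx p hp d) i) (diff_apply (dpdx p hp f) i),
      pd_apply (dpdx p hp d) i, pd_apply (dpdx p hp f) i]
  -- Γ in terms of second derivatives
  have hΓeq : ∀ e f h : Fin 2, Γ p e f h
      = ∑ d, (g p)⁻¹ e d * (∑ i, pd d x p i * pd f (fun r => pd h x r) p i) := by
    intro e f h
    rw [hΓ p e f h, Finset.mul_sum]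
    refine Finset.sum_congr rfl fun d _ => ?_
    rw [hdg f d h, hdg h d f, hdg d f h, XXsym p hp d f, XXsym p hp d h, XXsym p hp h f]
    simp only [Fin.sum_univ_three]
    ring
  -- Γ symmetric in its last two indices
  have hΓsym : ∀ e f h : Fin 2, Γ p e f h = Γ p e h f := by
    intro e f h
    rw [hΓeq e f h, hΓeq e h f, XXsym p hp f h]
  -- Gram matrix invertibility
  have hdet : IsUnit (g p).det := gram_isUnit (himm p hp) (fun e f => hg p e f)
  have hginv : g p * (g p)⁻¹ = 1 := Matrix.mul_nonsing_inv _ hdet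
  have hgisym : ∀ d e, (g p)⁻¹ d e = (g p)⁻¹ e d := by
    have hsym : (g p)ᵀ = g p := by
      ext d e
      rw [Matrix.transpose_apply, hg, hg]
      exact Finset.sum_congr rfl fun i _ => mul_comm _ _
    have h2 : ((g p)⁻¹)ᵀ = (g p)⁻¹ := by
      rw [Matrix.transpose_nonsing_inv, hsym]
    intro d e
    conv_rhs => rw [← h2]
    rfl
  -- normal stays unit: derivative of n is tangential
  have hNdN : ∀ e : Fin 2, ∑ i, pd e n p i * n p i = 0 := by
    intro e
    have hz : pd e (fun q => ∑ i, n q i * n q i) p = 0 := by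
      have hev : (fun q => ∑ i, n q i * n q i) =ᶠ[𝓝 p] (fun _ => (1:ℝ)) :=
        Filter.eventuallyEq_of_mem (hU.mem_nhds hp) (fun q hq => hunit q hq)
      rw [pd_congr hev, pd_const]
    have hexp : pd e (fun q => ∑ i, n q i * n q i) p
        = ∑ i, (pd e n p i * n p i + n p i * pd e n p i) := by
      rw [pd_sum _ _ (fun i _ => (diff_apply (dn p hp) i).fun_mul (diff_apply (dn p hp) i))]
      refine Finset.sum_congr rfl fun i _ => ?_
      rw [pd_mul (diff_apply (dn p hp) i) (diff_apply (dn p hp) i), pd_apply (dn p hp) i]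
    rw [hexp, Finset.sum_add_distrib] at hz
    have hc : ∑ i, n p i * pd e n p i = ∑ i, pd e n p i * n p i :=
      Finset.sum_congr rfl fun i _ => mul_comm _ _
    linarith
  -- Weingarten equations
  have hgg : ∀ e f : Fin 2, ∑ d, g p e d * (g p)⁻¹ d f = if e = f then 1 else 0 := by
    intro e f
    have h := congrFun (congrFun hginv e) f
    simpa [Matrix.mul_apply, Matrix.one_apply] using h
  have hW : ∀ e : Fin 2, pd e n p
      = ∑ d, (∑ f, (g p)⁻¹ d f * K p e f) • pd d x p := by
    intro e
    have key : pd e n p - ∑ d, (∑ f, (g p)⁻¹ d f * K p e f) • pd d x p = 0 := by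
      apply perp3 (himm p hp) (horth p hp) (hunit p hp)
      · intro a'
        have expand : ∑ i, pd a' x p i *
            (pd e n p i - (∑ d, (∑ f, (g p)⁻¹ d f * K p e f) • pd d x p) i)
            = (∑ i, pd e n p i * pd a' x p i)
              - ∑ d, (∑ f, (g p)⁻¹ d f * K p e f) * (∑ i, pd a' x p i * pd d x p i) := by
          simp only [Pi.sub_apply, Finset.sum_apply, Pi.smul_apply, smul_eq_mul,
            Fin.sum_univ_two, Fin.sum_univ_three]
          ring
        rw [show (pd e n p - ∑ d, (∑ f, (g p)⁻¹ d f * K p e f) • pd d x p)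
            = fun i => pd e n p i - (∑ d, (∑ f, (g p)⁻¹ d f * K p e f) • pd d x p) i from rfl]
        rw [expand]
        have h1 : ∀ d, (∑ i, pd a' x p i * pd d x p i) = g p a' d := fun d => (hg p a' d).symm
        have h2 : ∑ d, (∑ f, (g p)⁻¹ d f * K p e f) * g p a' d
            = ∑ f, (∑ d, g p a' d * (g p)⁻¹ d f) * K p e f := by
          simp only [Fin.sum_univ_two]; ring
        simp only [h1]
        rw [h2, ← hK p e a']
        simp only [hgg]
        simp [Fin.sum_univ_two]
      · have expand : ∑ i, n p i *
            (pd e n p i - (∑ d, (∑ f, (g p)⁻¹ d f * K p e f) • pd d x p) i)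
            = (∑ i, pd e n p i * n p i)
              - ∑ d, (∑ f, (g p)⁻¹ d f * K p e f) * (∑ i, n p i * pd d x p i) := by
          simp only [Pi.sub_apply, Finset.sum_apply, Pi.smul_apply, smul_eq_mul,
            Fin.sum_univ_two, Fin.sum_univ_three]
          ring
        rw [show (pd e n p - ∑ d, (∑ f, (g p)⁻¹ d f * K p e f) • pd d x p)
            = fun i => pd e n p i - (∑ d, (∑ f, (g p)⁻¹ d f * K p e f) • pd d x p) i from rfl]
        rw [expand, hNdN e]
        simp [horth p hp]
    have h := sub_eq_zero.mp key
    exact h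
  -- key contraction : pd e n · XX f h = Σ_d Γ^d_{f h} K_{e d}
  have hcontr : ∀ e f h : Fin 2,
      (∑ i, pd e n p i * pd f (fun r => pd h x r) p i)
      = ∑ d, Γ p d f h * K p e d := by
    intro e f h
    rw [hW e]
    simp only [hΓeq, Finset.sum_apply, Pi.smul_apply, smul_eq_mul]
    simp only [Fin.sum_univ_two, Fin.sum_univ_three]
    rw [hgisym 1 0]
    ring
  -- final assembly
  have t1 : ∑ d, Γ p d a b * K p c d = ∑ d, Γ p d b a * K p d c :=
    Finset.sum_congr rfl fun d _ => by rw [hΓsym d a b, Ksym c d]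
  have t2 : ∑ d, Γ p d c a * K p d b = ∑ d, Γ p d a c * K p b d :=
    Finset.sum_congr rfl fun d _ => by rw [hΓsym d c a, Ksym d b]
  rw [hdK a b c, hdK a c b]
  have splitL : -∑ i, (pd c n p i * pd a (fun r => pd b x r) p i
        + n p i * pd c (fun q => pd a (fun r => pd b x r) q) p i)
      = -(∑ i, pd c n p i * pd a (fun r => pd b x r) p i)
        - (∑ i, n p i * pd c (fun q => pd a (fun r => pd b x r) q) p i) := by
    rw [Finset.sum_add_distrib]; ring
  have splitR : -∑ i, (pd b n p i * pd a (fun r => pd c x r) p i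
        + n p i * pd b (fun q => pd a (fun r => pd c x r) q) p i)
      = -(∑ i, pd b n p i * pd a (fun r => pd c x r) p i)
        - (∑ i, n p i * pd b (fun q => pd a (fun r => pd c x r) q) p i) := by
    rw [Finset.sum_add_distrib]; ring
  rw [splitL, splitR, hcontr c a b, hcontr b a c, hE, t1, t2]
  ring
end

section
/- Let U ⊆ ℝ² be open, x : U → ℝ³ a smooth immersion with smooth unit normal n, and suppose the Gaussian curvature 𝒦 = det(g⁻¹K) is nonzero on U. Then the immersion can be recovered from the normal: for every a ∈ {1,2} and every point of U, ∂_a x = 𝒦⁻¹ Σ_b (H δ^b_a − (g⁻¹K)^b_a) ∂_b n. -/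
open Matrix
open scoped BigOperators

/-- Derivative of the unit-norm condition: `∂_c n ⊥ n`. -/
lemma aux_normal_orth (U : Set (Fin 2 → ℝ)) (hU : IsOpen U) (n : (Fin 2 → ℝ) → (Fin 3 → ℝ))
    (hn : ContDiffOn ℝ (⊤ : ℕ∞) n U)
    (hunit : ∀ p ∈ U, ∑ i, n p i * n p i = 1) (p : Fin 2 → ℝ) (hp : p ∈ U) (c : Fin 2) :
    ∑ i, n p i * pd c n p i = 0 := by
  have hpU : U ∈ nhds p := hU.mem_nhds hp
  have hnd : DifferentiableAt ℝ n p := (hn.contDiffAt hpU).differentiableAt (by simp)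
  set Dn := fderiv ℝ n p with hDn
  have hni : ∀ i : Fin 3, HasFDerivAt (fun q => n q i)
      ((ContinuousLinearMap.proj i).comp Dn) p := fun i =>
    ((ContinuousLinearMap.proj i : (Fin 3 → ℝ) →L[ℝ] ℝ)).hasFDerivAt.comp p hnd.hasFDerivAt
  have hsum : HasFDerivAt (fun q => ∑ i, n q i * n q i)
      (∑ i : Fin 3, (n p i • (ContinuousLinearMap.proj i).comp Dn
        + n p i • (ContinuousLinearMap.proj i).comp Dn)) p :=
    HasFDerivAt.fun_sum fun i _ => (hni i).mul (hni i)
  have hev : (fun q => ∑ i, n q i * n q i) =ᶠ[nhds p] fun _ => (1:ℝ) :=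
    Filter.eventuallyEq_of_mem hpU fun q hq => hunit q hq
  have h0 : (∑ i : Fin 3, (n p i • (ContinuousLinearMap.proj i).comp Dn
        + n p i • (ContinuousLinearMap.proj i).comp Dn)) = 0 := by
    rw [← hsum.fderiv, hev.fderiv_eq, fderiv_fun_const]
    rfl
  have h1 := congrFun (congrArg DFunLike.coe h0) (Pi.single c 1)
  simp only [ContinuousLinearMap.coe_sum', Finset.sum_apply, ContinuousLinearMap.add_apply,
    ContinuousLinearMap.coe_smul', Pi.smul_apply, ContinuousLinearMap.coe_comp',
    Function.comp_apply, ContinuousLinearMap.proj_apply, ContinuousLinearMap.zero_apply,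
    smul_eq_mul] at h1
  have h2 : (2:ℝ) * ∑ i, n p i * pd c n p i = 0 := by
    rw [Finset.mul_sum, ← h1]
    exact Finset.sum_congr rfl fun i _ => by simp [pd]; ring
  linarith [h2]

/-- Symmetry of the second fundamental form. -/
lemma aux_K_symm (U : Set (Fin 2 → ℝ)) (hU : IsOpen U) (x n : (Fin 2 → ℝ) → (Fin 3 → ℝ))
    (hx : ContDiffOn ℝ (⊤ : ℕ∞) x U) (hn : ContDiffOn ℝ (⊤ : ℕ∞) n U)
    (horth : ∀ p ∈ U, ∀ a : Fin 2, ∑ i, n p i * pd a x p i = 0)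
    (p : Fin 2 → ℝ) (hp : p ∈ U) (a b : Fin 2) :
    ∑ i, pd a n p i * pd b x p i = ∑ i, pd b n p i * pd a x p i := by
  have hpU : U ∈ nhds p := hU.mem_nhds hp
  have hnd : DifferentiableAt ℝ n p := (hn.contDiffAt hpU).differentiableAt (by simp)
  have hxcd : ContDiffAt ℝ (⊤ : ℕ∞) x p := hx.contDiffAt hpU
  have hx2d : DifferentiableAt ℝ (fderiv ℝ x) p :=
    (hxcd.fderiv_right (m := 1) (WithTop.coe_le_coe.mpr le_top)).differentiableAt one_ne_zero
  set Dn := fderiv ℝ n p with hDn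
  set x2 := fderiv ℝ (fderiv ℝ x) p with hx2
  have hsymm : ∀ v w, x2 v w = x2 w v := fun v w =>
    (hxcd.isSymmSndFDerivAt (by
      rw [minSmoothness_of_isRCLikeNormedField]; exact WithTop.coe_le_coe.mpr le_top)) v w
  have key : ∀ c d : Fin 2,
      ∑ i, pd c n p i * pd d x p i = - ∑ i, n p i * x2 (Pi.single c 1) (Pi.single d 1) i := by
    intro c d
    set vd : Fin 2 → ℝ := Pi.single d 1 with hvd
    set vc : Fin 2 → ℝ := Pi.single c 1 with hvc
    set Φ : ((Fin 2 → ℝ) →L[ℝ] (Fin 3 → ℝ)) →L[ℝ] (Fin 3 → ℝ) :=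
      ContinuousLinearMap.apply ℝ (Fin 3 → ℝ) vd with hΦ
    have hfd : HasFDerivAt (fun q => fderiv ℝ x q vd) (Φ.comp x2) p :=
      Φ.hasFDerivAt.comp p hx2d.hasFDerivAt
    have hfdi : ∀ i : Fin 3, HasFDerivAt (fun q => fderiv ℝ x q vd i)
        ((ContinuousLinearMap.proj i).comp (Φ.comp x2)) p := fun i =>
      ((ContinuousLinearMap.proj i : (Fin 3 → ℝ) →L[ℝ] ℝ)).hasFDerivAt.comp p hfd
    have hni : ∀ i : Fin 3, HasFDerivAt (fun q => n q i)
        ((ContinuousLinearMap.proj i).comp Dn) p := fun i =>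
      ((ContinuousLinearMap.proj i : (Fin 3 → ℝ) →L[ℝ] ℝ)).hasFDerivAt.comp p hnd.hasFDerivAt
    have hsum : HasFDerivAt (fun q => ∑ i, n q i * fderiv ℝ x q vd i)
        (∑ i : Fin 3, (n p i • ((ContinuousLinearMap.proj i).comp (Φ.comp x2))
          + fderiv ℝ x p vd i • ((ContinuousLinearMap.proj i).comp Dn))) p :=
      HasFDerivAt.fun_sum fun i _ => (hni i).mul (hfdi i)
    have hev : (fun q => ∑ i, n q i * fderiv ℝ x q vd i) =ᶠ[nhds p] fun _ => (0:ℝ) :=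
      Filter.eventuallyEq_of_mem hpU fun q hq => horth q hq d
    have h0 : (∑ i : Fin 3, (n p i • ((ContinuousLinearMap.proj i).comp (Φ.comp x2))
          + fderiv ℝ x p vd i • ((ContinuousLinearMap.proj i).comp Dn))) = 0 := by
      rw [← hsum.fderiv, hev.fderiv_eq, fderiv_fun_const]
      rfl
    have h1 := congrFun (congrArg DFunLike.coe h0) vc
    simp only [ContinuousLinearMap.coe_sum', Finset.sum_apply, ContinuousLinearMap.add_apply,
      ContinuousLinearMap.coe_smul', Pi.smul_apply, ContinuousLinearMap.coe_comp',
      Function.comp_apply, ContinuousLinearMap.proj_apply, ContinuousLinearMap.zero_apply,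
      ContinuousLinearMap.apply_apply, smul_eq_mul] at h1
    have h2 : ∑ i : Fin 3, (n p i * x2 vc vd i + pd c n p i * pd d x p i) = 0 := by
      rw [← h1]
      refine Finset.sum_congr rfl fun i _ => ?_
      simp [pd, hΦ, hvd, hvc, hDn, ContinuousLinearMap.apply_apply, mul_comm]
    rw [Finset.sum_add_distrib] at h2
    linarith
  rw [key a b, key b a, hsymm]

/-- Recovering an immersion from its normal when `𝒦 ≠ 0`:
`∂_a x = 𝒦⁻¹ Σ_b (H δ^b_a − (g⁻¹K)^b_a) ∂_b n`. -/
theorem immersion_from_normal (U : Set (Fin 2 → ℝ)) (hU : IsOpen U)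
    (x n : (Fin 2 → ℝ) → (Fin 3 → ℝ))
    (hx : ContDiffOn ℝ (⊤ : ℕ∞) x U) (hn : ContDiffOn ℝ (⊤ : ℕ∞) n U)
    (himm : ∀ p ∈ U, LinearIndependent ℝ (fun a : Fin 2 => pd a x p))
    (hunit : ∀ p ∈ U, ∑ i, n p i * n p i = 1)
    (horth : ∀ p ∈ U, ∀ a : Fin 2, ∑ i, n p i * pd a x p i = 0)
    (g : (Fin 2 → ℝ) → Matrix (Fin 2) (Fin 2) ℝ)
    (hg : ∀ p a b, g p a b = ∑ i, pd a x p i * pd b x p i)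
    (K : (Fin 2 → ℝ) → Matrix (Fin 2) (Fin 2) ℝ)
    (hK : ∀ p a b, K p a b = ∑ i, pd a n p i * pd b x p i)
    (H : (Fin 2 → ℝ) → ℝ) (hH : ∀ p, H p = Matrix.trace ((g p)⁻¹ * K p))
    (𝒦 : (Fin 2 → ℝ) → ℝ) (h𝒦 : ∀ p, 𝒦 p = Matrix.det ((g p)⁻¹ * K p))
    (h𝒦0 : ∀ p ∈ U, 𝒦 p ≠ 0) :
    ∀ a : Fin 2, ∀ p ∈ U,
      pd a x p = (𝒦 p)⁻¹ •
        ∑ b, (H p * (if b = a then (1:ℝ) else 0) - ((g p)⁻¹ * K p) b a) • pd b n p := by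
  intro a p hp
  have hA : ∀ c, ∑ i, n p i * pd c n p i = 0 :=
    aux_normal_orth U hU n hn hunit p hp
  have hKsym : ∀ c d, K p c d = K p d c := fun c d => by
    rw [hK, hK]; exact aux_K_symm U hU x n hx hn horth p hp c d
  have hdetg : (g p).det ≠ 0 := by
    intro h
    apply h𝒦0 p hp
    rw [h𝒦, Matrix.nonsing_inv_apply_not_isUnit _ (by simp [isUnit_iff_ne_zero, h]),
      Matrix.zero_mul, Matrix.det_zero]
  set S := (g p)⁻¹ * K p with hSdef
  have hgS : ∀ d b', ∑ c, g p d c * S c b' = K p d b' := by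
    intro d b'
    have hmul : g p * S = K p := by
      rw [hSdef, ← Matrix.mul_assoc, Matrix.mul_nonsing_inv _ (isUnit_iff_ne_zero.mpr hdetg),
        Matrix.one_mul]
    calc ∑ c, g p d c * S c b' = (g p * S) d b' := (Matrix.mul_apply).symm
      _ = K p d b' := by rw [hmul]
  -- ∂_b n lies in the span of ∂_0 x, ∂_1 x with coefficients S
  have hspan : ∀ b, pd b n p = ∑ c, S c b • pd c x p := by
    intro b
    set v : Fin 3 → ℝ := pd b n p - ∑ c, S c b • pd c x p with hv
    have hvi : ∀ i, v i = pd b n p i - ∑ c, S c b * pd c x p i := by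
      intro i; simp [hv]
    have hv1 : ∀ d : Fin 2, ∑ i, pd d x p i * v i = 0 := by
      intro d
      have e1 : ∑ i, pd d x p i * pd b n p i = K p b d := by
        rw [hK]; exact Finset.sum_congr rfl fun i _ => mul_comm _ _
      calc ∑ i, pd d x p i * v i
          = ∑ i, (pd d x p i * pd b n p i - ∑ c, S c b * (pd d x p i * pd c x p i)) := by
            refine Finset.sum_congr rfl fun i _ => ?_
            rw [hvi i, mul_sub, Finset.mul_sum]
            congr 1
            exact Finset.sum_congr rfl fun c _ => by ring
        _ = K p b d - ∑ c, S c b * g p d c := by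
            rw [Finset.sum_sub_distrib, e1, Finset.sum_comm]
            congr 1
            refine Finset.sum_congr rfl fun c _ => ?_
            rw [← Finset.mul_sum, hg]
        _ = 0 := by
            rw [hKsym b d, ← hgS d b, sub_eq_zero]
            exact Finset.sum_congr rfl fun c _ => mul_comm _ _
    have hv2 : ∑ i, n p i * v i = 0 := by
      calc ∑ i, n p i * v i
          = ∑ i, (n p i * pd b n p i - ∑ c, S c b * (n p i * pd c x p i)) := by
            refine Finset.sum_congr rfl fun i _ => ?_
            rw [hvi i, mul_sub, Finset.mul_sum]
            congr 1
            exact Finset.sum_congr rfl fun c _ => by ring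
        _ = 0 - ∑ c, S c b * 0 := by
            rw [Finset.sum_sub_distrib, hA b, Finset.sum_comm]
            congr 1
            refine Finset.sum_congr rfl fun c _ => ?_
            rw [← Finset.mul_sum, horth p hp c]
        _ = 0 := by simp
    set M : Matrix (Fin 3) (Fin 3) ℝ := Matrix.of ![pd 0 x p, pd 1 x p, n p] with hM
    have hent : ∀ j k, (M * Mᵀ) j k = ∑ i, M j i * M k i := by
      intro j k; simp [Matrix.mul_apply]
    have hMMT : (M * Mᵀ).det = (g p).det := by
      rw [Matrix.det_fin_three, hent 0 0, hent 0 1, hent 0 2, hent 1 0, hent 1 1, hent 1 2,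
        hent 2 0, hent 2 1, hent 2 2]
      have h00 : ∑ i, M 0 i * M 0 i = g p 0 0 := (hg p 0 0).symm
      have h01 : ∑ i, M 0 i * M 1 i = g p 0 1 := (hg p 0 1).symm
      have h10 : ∑ i, M 1 i * M 0 i = g p 1 0 := (hg p 1 0).symm
      have h11 : ∑ i, M 1 i * M 1 i = g p 1 1 := (hg p 1 1).symm
      have h20 : ∑ i, M 2 i * M 0 i = 0 := horth p hp 0
      have h21 : ∑ i, M 2 i * M 1 i = 0 := horth p hp 1
      have h02 : ∑ i, M 0 i * M 2 i = 0 := by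
        rw [← h20]; exact Finset.sum_congr rfl fun i _ => mul_comm _ _
      have h12 : ∑ i, M 1 i * M 2 i = 0 := by
        rw [← h21]; exact Finset.sum_congr rfl fun i _ => mul_comm _ _
      have h22 : ∑ i, M 2 i * M 2 i = 1 := hunit p hp
      rw [h00, h01, h02, h10, h11, h12, h20, h21, h22, Matrix.det_fin_two]
      ring
    have hdetM : M.det ≠ 0 := by
      intro h
      apply hdetg
      rw [← hMMT, Matrix.det_mul, Matrix.det_transpose, h, mul_zero]
    have hMv : M *ᵥ v = 0 := by
      have e : ∀ j, (M *ᵥ v) j = ∑ k, M j k * v k := fun j => by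
        simp [Matrix.mulVec, dotProduct]
      funext j
      rw [e j]
      fin_cases j
      · exact hv1 0
      · exact hv1 1
      · exact hv2
    have hv0 : v = 0 := by
      have h := congrArg (fun w => M⁻¹ *ᵥ w) hMv
      simpa [Matrix.mulVec_mulVec, Matrix.nonsing_inv_mul M (isUnit_iff_ne_zero.mpr hdetM),
        Matrix.one_mulVec, Matrix.mulVec_zero] using h
    rw [hv] at hv0
    exact sub_eq_zero.mp hv0
  -- final algebra
  have hspan2 : ∀ b, pd b n p = S 0 b • pd 0 x p + S 1 b • pd 1 x p := by
    intro b; rw [hspan b, Fin.sum_univ_two]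
  have hHs : H p = S 0 0 + S 1 1 := by
    rw [hH, ← hSdef, Matrix.trace_fin_two]
  have hKs : 𝒦 p = S 0 0 * S 1 1 - S 0 1 * S 1 0 := by
    rw [h𝒦, ← hSdef, Matrix.det_fin_two]
  have hK0 : S 0 0 * S 1 1 - S 0 1 * S 1 0 ≠ 0 := by
    rw [← hKs]; exact h𝒦0 p hp
  rw [Fin.sum_univ_two, hspan2 0, hspan2 1]
  funext i
  fin_cases a <;>
  · simp only [Pi.smul_apply, Pi.add_apply, smul_eq_mul, Fin.isValue, if_true, if_false,
      Fin.zero_eta, Fin.mk_one, one_ne_zero, zero_ne_one, reduceIte, mul_one, mul_zero]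
    rw [hHs, hKs]
    field_simp
    ring
end

section
/- Let g be a symmetric positive definite 2×2 real matrix, u ∈ ℝ² with uᵀ g⁻¹ u = 1, α ≠ 0 a real number, and K̂ = α(2 u uᵀ − g). Let ℓ₁, ℓ₂ ∈ ℝ² with ℓ₁ᵀ g ℓ₁ ≠ 0. Then the three conditions ℓ₁ᵀ g ℓ₂ = 0, ℓ₁ᵀ g ℓ₁ = ℓ₂ᵀ g ℓ₂, and ℓ₁ᵀ K̂ ℓ₂ = 0 hold simultaneously if and only if there exist γ ≠ 0 and ε ∈ {1,−1} such that either (ℓ₁ = γ·Ju and ℓ₂ = ε γ·g⁻¹u) or (ℓ₂ = γ·Ju and ℓ₁ = ε γ·g⁻¹u), where (Ju)^a = Σ_b ε^{ab} u_b / √(det g) with ε^{12} = −ε^{21} = 1, ε^{11} = ε^{22} = 0. -/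
/-! With `J = !![0, 1; -1, 0]`, the vectors `v = g⁻¹u` and `w = Ju / √(det g)` form a
`g`-orthonormal frame: `Jᵀ g J = adj g = det g • g⁻¹` and `u ⬝ Ju = 0`. Writing
`ℓ₁ = a v + b w`, `ℓ₂ = c v + e w`, the form `g` becomes the Euclidean one in these coordinates,
and since `u ⬝ ℓ = v ⬝ g ℓ`, `ℓ₁ᵀ K̂ ℓ₂ = α (2ac - (ac + be))`. The three conditions thus say
`ac = be = 0` and `a² + b² = c² + e² ≠ 0`, which puts one of `ℓ₁, ℓ₂` on `w` and the other on
`±v` with the same coefficient. -/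

open Matrix

namespace Matrix

variable {n K : Type*} [Fintype n] [CommRing K]

theorem sum_dotProduct_mulVec_smul_of_mul_mul_transpose_eq_one [DecidableEq n]
    {P g : Matrix n n K} (h : P * g * Pᵀ = 1) (x : n → K) :
    ∑ i, (P i ⬝ᵥ g *ᵥ x) • P i = x := by
  have hleft : Pᵀ * (P * g) = 1 := mul_eq_one_comm.mp h
  calc ∑ i, (P i ⬝ᵥ g *ᵥ x) • P i = Pᵀ *ᵥ ((P * g) *ᵥ x) := by
        rw [mulVec_transpose, vecMul_eq_sum, ← mulVec_mulVec]; rfl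
    _ = x := by rw [mulVec_mulVec, hleft, one_mulVec]

theorem IsSymm.dotProduct_mulVec_comm {g : Matrix n n K} (hg : g.IsSymm) (x y : n → K) :
    x ⬝ᵥ g *ᵥ y = y ⬝ᵥ g *ᵥ x := by
  rw [dotProduct_mulVec, ← mulVec_transpose, hg.eq, dotProduct_comm]

theorem IsSymm.inv_mulVec_dotProduct_mulVec [DecidableEq n] {g : Matrix n n K}
    (hg : g.IsSymm) (hdet : IsUnit g.det) (u x : n → K) :
    (g⁻¹ *ᵥ u) ⬝ᵥ g *ᵥ x = u ⬝ᵥ x := by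
  rw [hg.dotProduct_mulVec_comm, mulVec_mulVec, mul_nonsing_inv g hdet, one_mulVec,
    dotProduct_comm]

theorem dotProduct_mulVec_smul_vecMulVec_sub (α : K) (g : Matrix n n K) (u x y : n → K) :
    x ⬝ᵥ (α • ((2 : K) • vecMulVec u u - g)) *ᵥ y =
      α * (2 * (u ⬝ᵥ x) * (u ⬝ᵥ y) - x ⬝ᵥ g *ᵥ y) := by
  simp only [smul_mulVec, sub_mulVec, vecMulVec_mulVec, dotProduct_smul, dotProduct_sub,
    smul_eq_mul, MulOpposite.smul_eq_mul_unop, MulOpposite.unop_op]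
  rw [dotProduct_comm x u]
  ring

end Matrix

section FinTwo

variable {K : Type*} [CommRing K]

theorem eq_smul_add_smul_of_orthonormal {g : Matrix (Fin 2) (Fin 2) K} {v w : Fin 2 → K}
    (hvv : v ⬝ᵥ g *ᵥ v = 1) (hvw : v ⬝ᵥ g *ᵥ w = 0) (hwv : w ⬝ᵥ g *ᵥ v = 0)
    (hww : w ⬝ᵥ g *ᵥ w = 1) (x : Fin 2 → K) :
    x = (v ⬝ᵥ g *ᵥ x) • v + (w ⬝ᵥ g *ᵥ x) • w := by
  have h : of ![v, w] * g * (of ![v, w])ᵀ = 1 := by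
    ext i j
    have hij : (of ![v, w] * g * (of ![v, w])ᵀ) i j = ![v, w] i ⬝ᵥ g *ᵥ ![v, w] j := by
      rw [Matrix.mul_assoc]; rfl
    rw [hij, one_fin_two]
    fin_cases i <;> fin_cases j <;> assumption
  have hsum := sum_dotProduct_mulVec_smul_of_mul_mul_transpose_eq_one h x
  rw [Fin.sum_univ_two] at hsum
  exact hsum.symm

theorem dotProduct_mulVec_eq_of_orthonormal {g : Matrix (Fin 2) (Fin 2) K} {v w : Fin 2 → K}
    (hvv : v ⬝ᵥ g *ᵥ v = 1) (hvw : v ⬝ᵥ g *ᵥ w = 0) (hwv : w ⬝ᵥ g *ᵥ v = 0)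
    (hww : w ⬝ᵥ g *ᵥ w = 1) (x y : Fin 2 → K) :
    x ⬝ᵥ g *ᵥ y = (v ⬝ᵥ g *ᵥ x) * (v ⬝ᵥ g *ᵥ y) + (w ⬝ᵥ g *ᵥ x) * (w ⬝ᵥ g *ᵥ y) := by
  conv_lhs => rw [eq_smul_add_smul_of_orthonormal hvv hvw hwv hww x]
  simp only [add_dotProduct, smul_dotProduct, smul_eq_mul]

theorem dotProduct_rot_mulVec_self (u : Fin 2 → K) : u ⬝ᵥ !![0, 1; -1, 0] *ᵥ u = 0 := by
  simp only [dotProduct, mulVec, Fin.sum_univ_two, of_apply, cons_val', cons_val_zero,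
    cons_val_one, cons_val_fin_one]
  ring

theorem rot_mulVec_dotProduct_mulVec_rot_mulVec (g : Matrix (Fin 2) (Fin 2) K) (u : Fin 2 → K) :
    (!![0, 1; -1, 0] *ᵥ u) ⬝ᵥ g *ᵥ (!![0, 1; -1, 0] *ᵥ u) = u ⬝ᵥ g.adjugate *ᵥ u := by
  simp only [dotProduct, mulVec, Fin.sum_univ_two, of_apply, cons_val', cons_val_zero,
    cons_val_one, cons_val_fin_one, adjugate_fin_two]
  ring

end FinTwo

theorem normalized_rot_mulVec_dotProduct_mulVec_self {g : Matrix (Fin 2) (Fin 2) ℝ}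
    (hdet : 0 < g.det) {u : Fin 2 → ℝ} (hu : u ⬝ᵥ g⁻¹ *ᵥ u = 1) :
    let w := (√g.det)⁻¹ • (!![0, 1; -1, 0] *ᵥ u)
    w ⬝ᵥ g *ᵥ w = 1 := by
  have hadj : g.adjugate = g.det • g⁻¹ := by
    rw [inv_def, Ring.inverse_eq_inv', smul_smul, mul_inv_cancel₀ hdet.ne', one_smul]
  simp only [mulVec_smul, dotProduct_smul, smul_dotProduct, smul_eq_mul,
    rot_mulVec_dotProduct_mulVec_rot_mulVec, hadj, smul_mulVec, hu, mul_one]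
  rw [← mul_assoc, ← mul_inv, Real.mul_self_sqrt hdet.le, inv_mul_cancel₀ hdet.ne']

section Coordinates

variable {K : Type*} [CommRing K] [IsDomain K]

theorem exists_sign_mul_of_left_eq_zero {a b c e : K} (ha : a = 0) (hbe : b * e = 0)
    (hsq : a ^ 2 + b ^ 2 = c ^ 2 + e ^ 2) (hne : a ^ 2 + b ^ 2 ≠ 0) :
    e = 0 ∧ b ≠ 0 ∧ ∃ ε : K, (ε = 1 ∨ ε = -1) ∧ c = ε * b := by
  subst ha
  have hb : b ≠ 0 := by rintro rfl; simp at hne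
  have he : e = 0 := (mul_eq_zero.mp hbe).resolve_left hb
  subst he
  refine ⟨rfl, hb, ?_⟩
  rcases sq_eq_sq_iff_eq_or_eq_neg.mp (by linear_combination -hsq : c ^ 2 = b ^ 2) with h | h
  · exact ⟨1, Or.inl rfl, by rw [h, one_mul]⟩
  · exact ⟨-1, Or.inr rfl, by rw [h, neg_one_mul]⟩

theorem exists_sign_mul_cases_of_mul_eq_zero {a b c e : K} (hac : a * c = 0) (hbe : b * e = 0)
    (hsq : a ^ 2 + b ^ 2 = c ^ 2 + e ^ 2) (hne : a ^ 2 + b ^ 2 ≠ 0) :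
    (a = 0 ∧ e = 0 ∧ b ≠ 0 ∧ ∃ ε : K, (ε = 1 ∨ ε = -1) ∧ c = ε * b) ∨
      (c = 0 ∧ b = 0 ∧ e ≠ 0 ∧ ∃ ε : K, (ε = 1 ∨ ε = -1) ∧ a = ε * e) := by
  rcases mul_eq_zero.mp hac with ha | hc
  · exact .inl ⟨ha, exists_sign_mul_of_left_eq_zero ha hbe hsq hne⟩
  · exact .inr ⟨hc, exists_sign_mul_of_left_eq_zero hc (by rw [mul_comm, hbe]) hsq.symm
      (hsq ▸ hne)⟩

end Coordinates

theorem orthogonal_equal_length_iff_of_orthonormal {K : Type*} [CommRing K] [IsDomain K]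
    {g : Matrix (Fin 2) (Fin 2) K} (hg : g.IsSymm) {v w : Fin 2 → K}
    (hvv : v ⬝ᵥ g *ᵥ v = 1) (hvw : v ⬝ᵥ g *ᵥ w = 0) (hww : w ⬝ᵥ g *ᵥ w = 1)
    {l₁ l₂ : Fin 2 → K} (hl₁ : l₁ ⬝ᵥ g *ᵥ l₁ ≠ 0) :
    (l₁ ⬝ᵥ g *ᵥ l₂ = 0 ∧ l₁ ⬝ᵥ g *ᵥ l₁ = l₂ ⬝ᵥ g *ᵥ l₂ ∧
        (v ⬝ᵥ g *ᵥ l₁) * (v ⬝ᵥ g *ᵥ l₂) = 0) ↔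
      ∃ γ : K, γ ≠ 0 ∧ ∃ ε : K, (ε = 1 ∨ ε = -1) ∧
        ((l₁ = γ • w ∧ l₂ = (ε * γ) • v) ∨ (l₂ = γ • w ∧ l₁ = (ε * γ) • v)) := by
  have hwv : w ⬝ᵥ g *ᵥ v = 0 := by rw [hg.dotProduct_mulVec_comm, hvw]
  have hdecomp := eq_smul_add_smul_of_orthonormal hvv hvw hwv hww
  constructor
  · rintro ⟨h12, hlen, hv⟩
    rw [dotProduct_mulVec_eq_of_orthonormal hvv hvw hwv hww] at h12 hlen hl₁
    rw [dotProduct_mulVec_eq_of_orthonormal hvv hvw hwv hww l₂] at hlen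
    have hbe : (w ⬝ᵥ g *ᵥ l₁) * (w ⬝ᵥ g *ᵥ l₂) = 0 := by rwa [hv, zero_add] at h12
    rcases exists_sign_mul_cases_of_mul_eq_zero hv hbe (by linear_combination hlen)
        (fun h => hl₁ (by linear_combination h))
      with ⟨ha, he, hb, ε, hε, hc⟩ | ⟨hc, hb, he, ε, hε, ha⟩
    · refine ⟨_, hb, ε, hε, .inl ⟨?_, ?_⟩⟩
      · conv_lhs => rw [hdecomp l₁, ha, zero_smul, zero_add]
      · conv_lhs => rw [hdecomp l₂, he, hc, zero_smul, add_zero]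
    · refine ⟨_, he, ε, hε, .inr ⟨?_, ?_⟩⟩
      · conv_lhs => rw [hdecomp l₂, hc, zero_smul, zero_add]
      · conv_lhs => rw [hdecomp l₁, hb, ha, zero_smul, add_zero]
  · rintro ⟨γ, -, ε, hε, ⟨rfl, rfl⟩ | ⟨rfl, rfl⟩⟩ <;> rcases hε with rfl | rfl <;>
      simp only [mulVec_smul, dotProduct_smul, smul_dotProduct, smul_eq_mul,
        hvv, hvw, hwv, hww] <;>
      exact ⟨by ring, by ring, by ring⟩

/-- Characterization of the Jacobian columns of an isothermic coordinate change:
`ℓ₁ᵀgℓ₂ = 0`, `ℓ₁ᵀgℓ₁ = ℓ₂ᵀgℓ₂`, `ℓ₁ᵀK̂ℓ₂ = 0` hold iff (up to swapping) `ℓ₁` is a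
multiple `γ·Ju` of the rotated eigencovector and `ℓ₂ = ±γ·g⁻¹u`. -/
theorem isothermic_jacobian_characterization
    (g : Matrix (Fin 2) (Fin 2) ℝ) (hg : g.PosDef)
    (u : Fin 2 → ℝ) (hu : u ⬝ᵥ g⁻¹.mulVec u = 1)
    (α : ℝ) (hα : α ≠ 0)
    (Khat : Matrix (Fin 2) (Fin 2) ℝ)
    (hKhat : Khat = α • ((2 : ℝ) • Matrix.vecMulVec u u - g))
    (lev : Matrix (Fin 2) (Fin 2) ℝ) (hlev : lev = !![0, 1; -1, 0])
    (Ju : Fin 2 → ℝ) (hJu : ∀ a, Ju a = (∑ b, lev a b * u b) / Real.sqrt g.det)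
    (l₁ l₂ : Fin 2 → ℝ) (hl₁ : l₁ ⬝ᵥ g.mulVec l₁ ≠ 0) :
    (l₁ ⬝ᵥ g.mulVec l₂ = 0 ∧ l₁ ⬝ᵥ g.mulVec l₁ = l₂ ⬝ᵥ g.mulVec l₂ ∧
        l₁ ⬝ᵥ Khat.mulVec l₂ = 0) ↔
      ∃ γ : ℝ, γ ≠ 0 ∧ ∃ ε : ℝ, (ε = 1 ∨ ε = -1) ∧
        ((l₁ = γ • Ju ∧ l₂ = (ε * γ) • g⁻¹.mulVec u) ∨
         (l₂ = γ • Ju ∧ l₁ = (ε * γ) • g⁻¹.mulVec u)) := by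
  have hsymm : g.IsSymm := isHermitian_iff_isSymm.mp hg.isHermitian
  have hdet : 0 < g.det := hg.det_pos
  have hcoord := hsymm.inv_mulVec_dotProduct_mulVec hdet.ne'.isUnit u
  have hJu' : Ju = (√g.det)⁻¹ • (!![0, 1; -1, 0] *ᵥ u) := by
    ext a
    rw [hJu, hlev, div_eq_inv_mul]
    rfl
  subst hJu' hKhat
  rw [← orthogonal_equal_length_iff_of_orthonormal hsymm (by rwa [hcoord])
    (by rw [hcoord, dotProduct_smul, dotProduct_rot_mulVec_self, smul_zero])
    (normalized_rot_mulVec_dotProduct_mulVec_self hdet hu) hl₁, hcoord, hcoord]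
  refine and_congr_right fun h12 => and_congr_right fun _ => ?_
  rw [dotProduct_mulVec_smul_vecMulVec_sub, h12, mul_eq_zero, or_iff_right hα, sub_zero,
    mul_assoc, mul_eq_zero, or_iff_right two_ne_zero]
end
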